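/- arXiv:1805.07660 — 2 statements merged into one kernel-verified Lean document; each statement's English description precedes it below -/
import Mathlib

section
/- Let a, b ∈ ℝ with a ≠ 1 or b ≠ 0. On ℂ² with coordinates (z, w), define ω₁ = dz and ω₂ = dz/(1−a+ib) + e^{−(a+ib)z + (1−a+ib)z̄} dw. Then dω₂ = (ω₁ − ω₂) ∧ ω̄₁ − ((a+ib)ω₁ + (a−ib)ω̄₁) ∧ ω₂. -/
/-!
Since `dz` is closed, only the `dw` term of `ω₂` contributes: `dω₂ = dE ∧ dw`, where
`E = e^{Az + Bz̄}` with `A = −(a+ib)`, `B = 1−a+ib`. As `Az + Bz̄` is real-linear in `z`,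
`dE = E (A dz + B dz̄)`. Writing `E dw = ω₂ − ω₁/B`, the identity becomes a polynomial one in
the components of `u, v` and `1/B`.
-/

noncomputable section

open Complex ComplexConjugate

/-- Exterior derivative of a (complex-valued, real-linear) 1-form on `ℂ²`, evaluated on a
pair of constant vectors. -/
def extD1 (ω : ℂ × ℂ → ℂ × ℂ → ℂ) (p u v : ℂ × ℂ) : ℂ :=
  fderiv ℝ (fun q => ω q v) p u - fderiv ℝ (fun q => ω q u) p v

/-- Wedge product of two 1-forms on `ℂ²`. -/
def wdg (ω η : ℂ × ℂ → ℂ × ℂ → ℂ) (p u v : ℂ × ℂ) : ℂ :=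
  ω p u * η p v - ω p v * η p u

/-- `ω₁ = dz`. -/
def om1 : ℂ × ℂ → ℂ × ℂ → ℂ := fun _ u => u.1

/-- `ω₂ = dz/(1−a+ib) + e^{−(a+ib)z + (1−a+ib)z̄} dw`. -/
def om2 (a b : ℝ) : ℂ × ℂ → ℂ × ℂ → ℂ := fun p u =>
  u.1 / (1 - a + I * b)
    + Complex.exp (-((a : ℂ) + I * b) * p.1 + (1 - a + I * b) * conj p.1) * u.2

theorem one_sub_ofReal_add_I_mul_ne_zero {a b : ℝ} (h : a ≠ 1 ∨ b ≠ 0) :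
    (1 - a + I * b : ℂ) ≠ 0 := by
  intro h0
  have hre : 1 - a = 0 := by simpa using congrArg re h0
  have him : b = 0 := by simpa using congrArg im h0
  rcases h with h | h
  · exact h (by linarith)
  · exact h him

theorem extD1_const_add_mul (c g f : ℂ × ℂ → ℂ) {p : ℂ × ℂ} (hf : DifferentiableAt ℝ f p)
    (u v : ℂ × ℂ) :
    extD1 (fun q x => c x + f q * g x) p u v = fderiv ℝ f p u * g v - fderiv ℝ f p v * g u := by
  simp only [extD1, fderiv_const_add, fderiv_mul_const hf]
  simp [mul_comm]

theorem fderiv_cexp_mul_add_mul_conj (A B : ℂ) (p u : ℂ × ℂ) :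
    fderiv ℝ (fun q : ℂ × ℂ => exp (A * q.1 + B * conj q.1)) p u
      = exp (A * p.1 + B * conj p.1) * (A * u.1 + B * conj u.1) := by
  let T : ℂ × ℂ →L[ℝ] ℂ := A • ContinuousLinearMap.fst ℝ ℂ ℂ
    + B • (conjCLE.toContinuousLinearMap.comp (ContinuousLinearMap.fst ℝ ℂ ℂ))
  have hT : HasFDerivAt (fun q : ℂ × ℂ => A * q.1 + B * conj q.1) T p := T.hasFDerivAt
  rw [hT.cexp.fderiv]
  simp [T, mul_add]

/-- For `a, b ∈ ℝ` with `a ≠ 1` or `b ≠ 0`, the forms `ω₁ = dz` and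
`ω₂ = dz/(1−a+ib) + e^{−(a+ib)z + (1−a+ib)z̄} dw` on `ℂ²` satisfy
`dω₂ = (ω₁ − ω₂) ∧ ω̄₁ − ((a+ib)ω₁ + (a−ib)ω̄₁) ∧ ω₂`. -/
theorem stmt12 (a b : ℝ) (hab : a ≠ 1 ∨ b ≠ 0) :
    ∀ p u v : ℂ × ℂ, extD1 (om2 a b) p u v =
      wdg (fun q x => om1 q x - om2 a b q x) (fun q x => conj (om1 q x)) p u v
      - wdg (fun q x => ((a : ℂ) + I * b) * om1 q x + ((a : ℂ) - I * b) * conj (om1 q x))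
          (om2 a b) p u v := by
  intro p u v
  have hB := one_sub_ofReal_add_I_mul_ne_zero hab
  have hE : DifferentiableAt ℝ
      (fun q : ℂ × ℂ => exp (-((a : ℂ) + I * b) * q.1 + (1 - a + I * b) * conj q.1)) p := by
    fun_prop
  unfold om2
  rw [extD1_const_add_mul (fun x => x.1 / (1 - a + I * b)) Prod.snd _ hE,
    fderiv_cexp_mul_add_mul_conj, fderiv_cexp_mul_add_mul_conj]
  simp only [wdg, om1]
  field_simp
  ring

end
end

section
/- Let b ∈ ℝ, b ≠ 0, and let 𝔥 be the real Lie algebra with basis u, v, w and brackets [u,v] = 2bu + 2w, [u,w] = −bu, [v,w] = (2b² − 1/2)u + bv + 2bw. Then 𝔥 is isomorphic to 𝔰𝔩(2,ℝ); explicitly (for b ≠ −1/2), H = 2v, X = ((2b−1)/(4b²))u + (1/(2b))v + (1/(2b²))w, Y = (2b+1)u − 2bv + 2w satisfy [H,X] = 2X, [H,Y] = −2Y, [X,Y] = H. -/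
/-!
`H = 2v`, `X`, `Y` form an `sl₂`-triple, by direct computation from the brackets. Away from
characteristic `2` an `sl₂`-triple is linearly independent, being made of eigenvectors of
`ad H` for the distinct eigenvalues `0, 2, -2`. Hence in a `3`-dimensional Lie algebra it is a
basis, and sending it to the standard triple of `𝔰𝔩(2)` is a Lie isomorphism since the
structure constants agree.
-/

open Module LieAlgebra.SpecialLinear

section LieBasis

variable {R ι L L' : Type*} [CommRing R] [LieRing L] [LieAlgebra R L] [LieRing L']
  [LieAlgebra R L']

theorem LinearMap.map_lie_of_basis [LinearOrder ι] (B : Basis ι R L) (f : L →ₗ[R] L')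
    (h : ∀ i j, i < j → f ⁅B i, B j⁆ = ⁅f (B i), f (B j)⁆) (x y : L) :
    f ⁅x, y⁆ = ⁅f x, f y⁆ := by
  have key : (LieModule.toEnd R L L : L →ₗ[R] L →ₗ[R] L).compr₂ f =
      (LieModule.toEnd R L' L' : L' →ₗ[R] L' →ₗ[R] L').compl₁₂ f f := by
    refine LinearMap.ext_basis B B fun i j => ?_
    simp only [LinearMap.compr₂_apply, LinearMap.compl₁₂_apply, LieHom.coe_toLinearMap,
      LieModule.toEnd_apply_apply]
    rcases lt_trichotomy i j with hij | rfl | hij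
    · exact h i j hij
    · simp
    · rw [← lie_skew, map_neg, h j i hij, lie_skew]
  exact LinearMap.congr_fun₂ key x y

noncomputable def Module.Basis.lieEquiv [LinearOrder ι] (B : Basis ι R L)
    (B' : Basis ι R L')
    (h : ∀ i j, i < j → B.equiv B' (.refl ι) ⁅B i, B j⁆ = ⁅B' i, B' j⁆) :
    L ≃ₗ⁅R⁆ L' :=
  { B.equiv B' (.refl ι) with
    map_lie' := LinearMap.map_lie_of_basis B (B.equiv B' (.refl ι)).toLinearMap
      (fun i j hij => by simpa using h i j hij) _ _ }

end LieBasis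

namespace IsSl2Triple

variable {K L L' : Type*} [Field K] [LieRing L] [LieAlgebra K L] [LieRing L'] [LieAlgebra K L']
  {h e f : L}

theorem of_lie_eq_smul (hh : h ≠ 0) (hef : ⁅e, f⁆ = h) (he : ⁅h, e⁆ = (2 : K) • e)
    (hf : ⁅h, f⁆ = (-2 : K) • f) : IsSl2Triple h e f where
  h_ne_zero := hh
  lie_e_f := hef
  lie_h_e_nsmul := by rw [he, ofNat_smul_eq_nsmul]
  lie_h_f_nsmul := by rw [hf, neg_smul, ofNat_smul_eq_nsmul]

theorem linearIndependent [NeZero (2 : K)] (t : IsSl2Triple h e f) :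
    LinearIndependent K ![h, e, f] := by
  refine (LieModule.toEnd K L L h).eigenvectors_linearIndependent' ![0, 2, -2] ?_ _ fun i => ?_
  · have h2 : (2 : K) ≠ 0 := two_ne_zero
    have hne : (2 : K) ≠ -2 := fun hne =>
      h2 (mul_self_eq_zero.mp (by linear_combination hne))
    intro i j hij
    fin_cases i <;> fin_cases j <;> simp_all [h2.symm, hne.symm]
  · rw [Module.End.hasEigenvector_iff, Module.End.mem_eigenspace_iff]
    fin_cases i
    · exact ⟨by simp, t.h_ne_zero⟩
    · exact ⟨by simpa using t.lie_h_e_smul K, t.e_ne_zero⟩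
    · exact ⟨by simpa using t.lie_lie_smul_f K, t.f_ne_zero⟩

noncomputable def basis [NeZero (2 : K)] (t : IsSl2Triple h e f) (hL : finrank K L = 3) :
    Basis (Fin 3) K L :=
  basisOfLinearIndependentOfCardEqFinrank t.linearIndependent (by simp [hL])

noncomputable def lieEquiv [NeZero (2 : K)] {h' e' f' : L'} (t : IsSl2Triple h e f)
    (t' : IsSl2Triple h' e' f') (hL : finrank K L = 3) (hL' : finrank K L' = 3) :
    L ≃ₗ⁅K⁆ L' :=
  (t.basis hL).lieEquiv (t'.basis hL') fun i j hij => by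
    set φ := (t.basis hL).equiv (t'.basis hL') (.refl _)
    have hφ (k : Fin 3) : φ (![h, e, f] k) = ![h', e', f'] k := by
      simpa [φ, basis] using (t.basis hL).equiv_apply (t'.basis hL') (.refl _) (i := k)
    have hφh : φ h = h' := hφ 0
    have hφe : φ e = e' := hφ 1
    have hφf : φ f = f' := hφ 2
    fin_cases i <;> fin_cases j <;> simp at hij <;>
      simp [basis, t.lie_h_e_smul K, t.lie_lie_smul_f K, t.lie_e_f, t'.lie_h_e_smul K,
        t'.lie_lie_smul_f K, t'.lie_e_f, hφh, hφe, hφf]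

end IsSl2Triple

namespace LieAlgebra.SpecialLinear

theorem finrank_sl {K n : Type*} [Field K] [Fintype n] [DecidableEq n] [Nonempty n] :
    finrank K (sl n K) = Fintype.card n ^ 2 - 1 := by
  have hrange : LinearMap.range (Matrix.traceLinearMap n K K) = ⊤ :=
    LinearMap.range_eq_top.mpr Matrix.trace_surjective
  have := LinearMap.finrank_range_add_finrank_ker (Matrix.traceLinearMap n K K)
  rw [hrange, finrank_top, Module.finrank_matrix, finrank_self, mul_one] at this
  change finrank K (LinearMap.ker (Matrix.traceLinearMap n K K)) = _
  rw [sq]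
  omega

theorem isSl2Triple_fin_two {R : Type*} [CommRing R] [Nontrivial R] :
    IsSl2Triple (singleSubSingle (0 : Fin 2) 1 (1 : R)) (single 0 1 (by decide) 1)
      (single 1 0 (by decide) 1) where
  h_ne_zero := fun h => by simpa using congr_arg (fun A : sl (Fin 2) R => A.val 0 0) h
  lie_e_f := by ext i j; fin_cases i <;> fin_cases j <;> norm_num [Ring.lie_def]
  lie_h_e_nsmul := by ext i j; fin_cases i <;> fin_cases j <;> norm_num [Ring.lie_def]
  lie_h_f_nsmul := by ext i j; fin_cases i <;> fin_cases j <;> norm_num [Ring.lie_def]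

end LieAlgebra.SpecialLinear

theorem sl2_relations_of_brackets {K L : Type*} [Field K] [NeZero (2 : K)] [LieRing L]
    [LieAlgebra K L] {b : K} (hb : b ≠ 0) {u v w : L}
    (huv : ⁅u, v⁆ = (2 * b) • u + (2 : K) • w)
    (huw : ⁅u, w⁆ = (-b) • u)
    (hvw : ⁅v, w⁆ = (2 * b ^ 2 - 1/2) • u + b • v + (2 * b) • w) :
    ⁅(2 : K) • v,
        ((2 * b - 1) / (4 * b ^ 2)) • u + (1 / (2 * b)) • v + (1 / (2 * b ^ 2)) • w⁆ =
      (2 : K) •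
        (((2 * b - 1) / (4 * b ^ 2)) • u + (1 / (2 * b)) • v + (1 / (2 * b ^ 2)) • w) ∧
    ⁅(2 : K) • v, (2 * b + 1) • u + (-(2 * b)) • v + (2 : K) • w⁆ =
      (-2 : K) • ((2 * b + 1) • u + (-(2 * b)) • v + (2 : K) • w) ∧
    ⁅((2 * b - 1) / (4 * b ^ 2)) • u + (1 / (2 * b)) • v + (1 / (2 * b ^ 2)) • w,
        (2 * b + 1) • u + (-(2 * b)) • v + (2 : K) • w⁆ = (2 : K) • v := by
  have hvu : ⁅v, u⁆ = -((2 * b) • u + (2 : K) • w) := by rw [← lie_skew, huv]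
  have hwu : ⁅w, u⁆ = -((-b) • u) := by rw [← lie_skew, huw]
  have hwv : ⁅w, v⁆ = -((2 * b ^ 2 - 1/2) • u + b • v + (2 * b) • w) := by
    rw [← lie_skew, hvw]
  have h2 : (2 : K) ≠ 0 := two_ne_zero
  have h4 : (4 : K) ≠ 0 := by rw [show (4 : K) = 2 * 2 by norm_num]; exact mul_ne_zero h2 h2
  refine ⟨?_, ?_, ?_⟩ <;>
  · simp only [lie_add, add_lie, lie_smul, smul_lie, lie_self, smul_zero, zero_add, add_zero,
      huv, huw, hvw, hvu, hwu, hwv]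
    match_scalars <;> field_simp <;> ring

theorem stmt17_general (b : ℝ) (hb : b ≠ 0)
    (L : Type) [LieRing L] [LieAlgebra ℝ L] (B : Module.Basis (Fin 3) ℝ L)
    (u v w : L) (hv : v = B 1)
    (huv : ⁅u, v⁆ = (2 * b) • u + (2 : ℝ) • w)
    (huw : ⁅u, w⁆ = (-b) • u)
    (hvw : ⁅v, w⁆ = (2 * b ^ 2 - 1/2) • u + b • v + (2 * b) • w) :
    Nonempty (L ≃ₗ⁅ℝ⁆ LieAlgebra.SpecialLinear.sl (Fin 2) ℝ) ∧
    (⁅(2 : ℝ) • v, ((2 * b - 1) / (4 * b ^ 2)) • u + (1 / (2 * b)) • v + (1 / (2 * b ^ 2)) • w⁆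
        = (2 : ℝ) • (((2 * b - 1) / (4 * b ^ 2)) • u + (1 / (2 * b)) • v + (1 / (2 * b ^ 2)) • w)) ∧
    (⁅(2 : ℝ) • v, (2 * b + 1) • u + (-(2 * b)) • v + (2 : ℝ) • w⁆
        = (-2 : ℝ) • ((2 * b + 1) • u + (-(2 * b)) • v + (2 : ℝ) • w)) ∧
    (⁅((2 * b - 1) / (4 * b ^ 2)) • u + (1 / (2 * b)) • v + (1 / (2 * b ^ 2)) • w,
        (2 * b + 1) • u + (-(2 * b)) • v + (2 : ℝ) • w⁆ = (2 : ℝ) • v) := by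
  obtain ⟨hHX, hHY, hXY⟩ := sl2_relations_of_brackets hb huv huw hvw
  have hH : (2 : ℝ) • v ≠ 0 := smul_ne_zero two_ne_zero (hv ▸ B.ne_zero 1)
  have t := IsSl2Triple.of_lie_eq_smul hH hXY hHX hHY
  have hL : finrank ℝ L = 3 := (finrank_eq_card_basis B).trans (Fintype.card_fin 3)
  have hsl : finrank ℝ (sl (Fin 2) ℝ) = 3 := by simp [finrank_sl]
  exact ⟨⟨t.lieEquiv isSl2Triple_fin_two hL hsl⟩, hHX, hHY, hXY⟩

/-- For `b ∈ ℝ`, `b ∉ {0, −1/2}`, the 3-dimensional real Lie algebra `𝔥` with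
basis `u, v, w` and brackets `[u,v] = 2bu + 2w`, `[u,w] = −bu`,
`[v,w] = (2b² − 1/2)u + bv + 2bw` is isomorphic to `𝔰𝔩(2,ℝ)`; explicitly `H = 2v`,
`X = ((2b−1)/(4b²))u + (1/(2b))v + (1/(2b²))w`, `Y = (2b+1)u − 2bv + 2w` satisfy
`[H,X] = 2X`, `[H,Y] = −2Y`, `[X,Y] = H`. -/
theorem stmt17 (b : ℝ) (hb : b ≠ 0) (hb' : b ≠ -(1/2))
    (L : Type) [LieRing L] [LieAlgebra ℝ L] (B : Module.Basis (Fin 3) ℝ L)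
    (u v w : L) (hu : u = B 0) (hv : v = B 1) (hw : w = B 2)
    (huv : ⁅u, v⁆ = (2 * b) • u + (2 : ℝ) • w)
    (huw : ⁅u, w⁆ = (-b) • u)
    (hvw : ⁅v, w⁆ = (2 * b ^ 2 - 1/2) • u + b • v + (2 * b) • w) :
    Nonempty (L ≃ₗ⁅ℝ⁆ LieAlgebra.SpecialLinear.sl (Fin 2) ℝ) ∧
    (⁅(2 : ℝ) • v, ((2 * b - 1) / (4 * b ^ 2)) • u + (1 / (2 * b)) • v + (1 / (2 * b ^ 2)) • w⁆
        = (2 : ℝ) • (((2 * b - 1) / (4 * b ^ 2)) • u + (1 / (2 * b)) • v + (1 / (2 * b ^ 2)) • w)) ∧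
    (⁅(2 : ℝ) • v, (2 * b + 1) • u + (-(2 * b)) • v + (2 : ℝ) • w⁆
        = (-2 : ℝ) • ((2 * b + 1) • u + (-(2 * b)) • v + (2 : ℝ) • w)) ∧
    (⁅((2 * b - 1) / (4 * b ^ 2)) • u + (1 / (2 * b)) • v + (1 / (2 * b ^ 2)) • w,
        (2 * b + 1) • u + (-(2 * b)) • v + (2 : ℝ) • w⁆ = (2 : ℝ) • v) :=
  stmt17_general b hb L B u v w hv huv huw hvw
end
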